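/- Let d ≥ 8, let v ∈ ℝ^d be nonzero, let Q : ℝ^d → ℝ^d be the orthogonal projection onto the hyperplane {z ∈ ℝ^d : ⟪z, v⟫ = 0}, i.e. Q n = n − (⟪v, n⟫/‖v‖²)·v, and let w ∈ ℝ^d be a unit vector with ⟪w, v⟫ = 0. Then ∫ arcsin( |⟪Q n, w⟫| / ‖Q n‖ ) dγ(n) ≤ arccos(√(1 − 1/(d−1))), where the integrand is interpreted as 0 when Q n = 0 (a γ-null set). -/

import Mathlib

/-!
Choose an orthonormal basis whose first two vectors are `v / ‖v‖` and `w`. In these coordinates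
the standard Gaussian has i.i.d. `N(0, 1)` coordinates `y`, and the integrand becomes `arcsin X`
with `X = |y₁| / (∑_{j ≠ 0} y_j²)^{1/2}`. The `d - 1` coordinates `y_j`, `j ≠ 0`, are exchangeable
and their squared ratios sum to `1`, so `E[X²] = 1 / (d - 1) =: m`. As long as `m ≤ 1/7`, the
concave-then-convex function `t ↦ arcsin √t` lies below its tangent at `m` on all of `[0, 1]`, which
gives a Jensen-type bound `E[arcsin X] ≤ arcsin √m = arccos √(1 - m)`.
-/

open MeasureTheory ProbabilityTheory
open scoped RealInnerProductSpace

noncomputable def stdGaussian (d : ℕ) : Measure (EuclideanSpace ℝ (Fin d)) :=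
  Measure.map (MeasurableEquiv.toLp 2 (Fin d → ℝ))
    (Measure.pi fun _ : Fin d => gaussianReal 0 1)

open Real Set Finset

-- `cos φ + φ sin β` rises on `[0, β]`, falls on `[β, π - β]` and rises again on `[π - β, π]`,
-- so only the endpoint `φ = π` has to be checked separately; this is `hπ`.
lemma cos_le_cos_sub_mul_sin {β φ : ℝ} (hβ₀ : 0 ≤ β) (hβ : β ≤ π / 2)
    (hπ : (π - β) * sin β ≤ 1 + cos β) (hφ₀ : 0 ≤ φ) (hφ : φ ≤ π) :
    cos φ ≤ cos β - (φ - β) * sin β := by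
  set h : ℝ → ℝ := fun x => cos x + x * sin β
  have hderiv (s : Set ℝ) (x : ℝ) : HasDerivWithinAt h (sin β - sin x) s x := by
    have := ((hasDerivAt_cos x).add ((hasDerivAt_id' x).mul_const (sin β))).hasDerivWithinAt
      (s := s)
    rwa [one_mul, neg_add_eq_sub] at this
  have hcont : Continuous h := by fun_prop
  have hmono₁ : MonotoneOn h (Icc 0 β) :=
    monotoneOn_of_hasDerivWithinAt_nonneg (convex_Icc _ _) hcont.continuousOn
      (fun x _ => hderiv _ x) fun x hx => by
        rw [interior_Icc] at hx
        exact sub_nonneg.2 (sin_le_sin_of_le_of_le_pi_div_two (by linarith [hx.1]) hβ hx.2.le)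
  have hanti : AntitoneOn h (Icc β (π - β)) :=
    antitoneOn_of_hasDerivWithinAt_nonpos (convex_Icc _ _) hcont.continuousOn
      (fun x _ => hderiv _ x) fun x hx => by
        rw [interior_Icc] at hx
        rw [sub_nonpos]
        rcases le_total x (π / 2) with hx' | hx'
        · exact sin_le_sin_of_le_of_le_pi_div_two (by linarith) hx' hx.1.le
        · rw [← sin_pi_sub x]
          exact sin_le_sin_of_le_of_le_pi_div_two (by linarith) (by linarith) (by linarith [hx.2])
  have hmono₂ : MonotoneOn h (Icc (π - β) π) :=
    monotoneOn_of_hasDerivWithinAt_nonneg (convex_Icc _ _) hcont.continuousOn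
      (fun x _ => hderiv _ x) fun x hx => by
        rw [interior_Icc] at hx
        rw [sub_nonneg, ← sin_pi_sub x]
        exact sin_le_sin_of_le_of_le_pi_div_two (by linarith [hx.2]) hβ (by linarith [hx.1])
  suffices h φ ≤ h β by simp only [h] at this; linarith
  have hπβ : h π ≤ h β := by simp only [h, cos_pi]; linarith
  rcases le_total φ β with h1 | h1
  · exact hmono₁ ⟨hφ₀, h1⟩ ⟨hβ₀, le_rfl⟩ h1
  rcases le_total φ (π - β) with h2 | h2
  · exact hanti ⟨le_rfl, by linarith⟩ ⟨h1, h2⟩ h1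
  · exact (hmono₂ ⟨h2, hφ⟩ ⟨by linarith, le_rfl⟩ hφ).trans hπβ

lemma arcsin_le_arcsin_sqrt_add_sq_sub_div {m x : ℝ} (hm₀ : 0 < m) (hm : m ≤ 1 / 7) (hx₀ : 0 ≤ x)
    (hx₁ : x ≤ 1) :
    arcsin x ≤ arcsin √m + (x ^ 2 - m) / (2 * √(m * (1 - m))) := by
  set α := arcsin √m
  set s := √m
  set c := √(1 - m)
  have hs₀ : 0 < s := sqrt_pos.2 hm₀
  have hs2 : s ^ 2 = m := sq_sqrt hm₀.le
  have hc₀ : 0 < c := sqrt_pos.2 (by linarith)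
  have hc2 : c ^ 2 = 1 - m := sq_sqrt (by linarith)
  have hsinα : sin α = s := sin_arcsin (by linarith) (by nlinarith)
  have hcosα : cos α = c := by rw [cos_arcsin, hs2]
  have hsα : s ≤ α := hsinα ▸ sin_le (arcsin_nonneg.2 hs₀.le)
  have hα : 2 * α ≤ π / 2 := by
    have : α ≤ π / 4 := by
      rw [arcsin_le_iff_le_sin ⟨by linarith, by nlinarith⟩
        ⟨by linarith [pi_pos], by linarith [pi_pos]⟩, sin_pi_div_four, sqrt_le_iff]
      refine ⟨by positivity, ?_⟩
      rw [div_pow, sq_sqrt zero_le_two]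
      linarith
    linarith
  have hend : (π - 2 * α) * sin (2 * α) ≤ 1 + cos (2 * α) := by
    have hπ : π < 3.15 := pi_lt_d2
    have hc : 1 - m / 2 - m ^ 2 / 2 ≤ c := by nlinarith
    have hs : s ≤ 0.378 := by nlinarith
    have h : (π - 2 * α) * s ≤ c := calc
      (π - 2 * α) * s ≤ (3.15 - 2 * s) * s := by gcongr
      _ ≤ 1 - m / 2 - m ^ 2 / 2 := by nlinarith [mul_nonneg hs₀.le (sub_nonneg.2 hs)]
      _ ≤ c := hc
    rw [sin_two_mul, cos_two_mul, hsinα, hcosα]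
    nlinarith
  -- With `x = sin θ` and `√m = sin α`, the claim is the tangent bound for `cos` at `2 α`.
  have key := cos_le_cos_sub_mul_sin (φ := 2 * arcsin x) (by linarith) hα hend
    (by linarith [arcsin_nonneg.2 hx₀]) (by linarith [arcsin_le_pi_div_two x])
  rw [cos_two_mul_eq_one_sub, sin_arcsin (by linarith) hx₁, sin_two_mul, cos_two_mul_eq_one_sub,
    hsinα, hcosα, hs2] at key
  rw [sqrt_mul hm₀.le, ← sub_le_iff_le_add', le_div_iff₀ (by positivity)]
  nlinarith

lemma integral_arcsin_le_arcsin_sqrt_integral_sq {Ω : Type*} [MeasurableSpace Ω] {P : Measure Ω}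
    [IsProbabilityMeasure P] {X : Ω → ℝ} (hX : AEStronglyMeasurable X P) (hX₀ : ∀ ω, 0 ≤ X ω)
    (hX₁ : ∀ ω, X ω ≤ 1) (hm₀ : 0 < ∫ ω, X ω ^ 2 ∂P) (hm : ∫ ω, X ω ^ 2 ∂P ≤ 1 / 7) :
    ∫ ω, arcsin (X ω) ∂P ≤ arcsin √(∫ ω, X ω ^ 2 ∂P) := by
  set m := ∫ ω, X ω ^ 2 ∂P
  have hX2 : Integrable (fun ω => X ω ^ 2) P :=
    Integrable.of_bound (hX.pow 2) 1 (ae_of_all _ fun ω => by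
      rw [Real.norm_of_nonneg (sq_nonneg _)]; exact pow_le_one₀ (hX₀ ω) (hX₁ ω))
  have hasin : Integrable (fun ω => arcsin (X ω)) P :=
    Integrable.of_bound (continuous_arcsin.comp_aestronglyMeasurable hX) (π / 2)
      (ae_of_all _ fun ω => abs_le.2 ⟨neg_pi_div_two_le_arcsin _, arcsin_le_pi_div_two _⟩)
  set c := 2 * √(m * (1 - m))
  have hdev : Integrable (fun ω => (X ω ^ 2 - m) / c) P :=
    (hX2.sub (integrable_const m)).div_const c
  calc ∫ ω, arcsin (X ω) ∂P
      ≤ ∫ ω, arcsin √m + (X ω ^ 2 - m) / c ∂P :=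
        integral_mono hasin ((integrable_const _).add hdev)
          fun ω => arcsin_le_arcsin_sqrt_add_sq_sub_div hm₀ hm (hX₀ ω) (hX₁ ω)
    _ = arcsin √m := by
        rw [integral_add (integrable_const _) hdev, integral_div,
          integral_sub hX2 (integrable_const m)]
        simp [m]

lemma integrable_sq_div_sum_sq {ι : Type*} [Fintype ι] {μ : Measure ℝ}
    [IsFiniteMeasure μ] {s : Finset ι} {i : ι} (hi : i ∈ s) :
    Integrable (fun y : ι → ℝ => y i ^ 2 / ∑ j ∈ s, y j ^ 2) (Measure.pi fun _ => μ) := by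
  refine Integrable.mono' (integrable_const 1) (Measurable.aestronglyMeasurable (by fun_prop))
    (ae_of_all _ fun y => ?_)
  rw [Real.norm_of_nonneg (by positivity)]
  exact div_le_one_of_le₀ (single_le_sum (fun j _ => sq_nonneg (y j)) hi) (by positivity)

lemma integral_sq_div_sum_sq {ι : Type*} [Fintype ι] (μ : Measure ℝ) [IsProbabilityMeasure μ]
    [NullSingletonClass μ] {s : Finset ι} {i : ι} (hi : i ∈ s) :
    ∫ y, y i ^ 2 / ∑ j ∈ s, y j ^ 2 ∂(Measure.pi fun _ => μ) = 1 / #s := by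
  classical
  set P := Measure.pi fun _ : ι => μ
  set f : ι → (ι → ℝ) → ℝ := fun k y => y k ^ 2 / ∑ j ∈ s, y j ^ 2
  have hswap : ∀ k ∈ s, ∫ y, f k y ∂P = ∫ y, f i y ∂P := by
    intro k hk
    set σ := Equiv.swap i k
    rw [← (measurePreserving_piCongrLeft (fun _ => μ) σ).integral_comp' (f k)]
    refine integral_congr_ae (ae_of_all _ fun y => ?_)
    simp only [f, MeasurableEquiv.coe_piCongrLeft, Equiv.piCongrLeft_apply_eq_cast, cast_eq,
      σ, Equiv.symm_swap, Equiv.swap_apply_right]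
    rw [Equiv.Perm.sum_comp _ s (fun j => y j ^ 2)]
    intro j hj
    by_contra hjs
    exact hj (Equiv.swap_apply_of_ne_of_ne (ne_of_mem_of_not_mem hi hjs).symm
      (ne_of_mem_of_not_mem hk hjs).symm)
  have hsum : ∀ᵐ y ∂P, ∑ k ∈ s, f k y = 1 := by
    filter_upwards [compl_mem_ae_iff.2 (Measure.pi_hyperplane (fun _ => μ) i 0)] with y hy
    rw [← sum_div, div_self]
    exact ((pow_two_pos_of_ne_zero hy).trans_le
      (single_le_sum (fun j _ => sq_nonneg (y j)) hi)).ne'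
  have : (#s : ℝ) * ∫ y, f i y ∂P = 1 := by
    rw [← nsmul_eq_mul, ← sum_const, ← sum_congr rfl hswap,
      ← integral_finsetSum _ fun k hk => integrable_sq_div_sum_sq hk, integral_congr_ae hsum]
    simp
  rw [eq_div_iff (Nat.cast_ne_zero.2 (card_ne_zero_of_mem hi)), mul_comm, this]

lemma integral_arcsin_abs_div_sqrt_sum_sq_le {ι : Type*} [Fintype ι] (μ : Measure ℝ)
    [IsProbabilityMeasure μ] [NullSingletonClass μ] {s : Finset ι} {i : ι} (hi : i ∈ s)
    (hs : 7 ≤ #s) :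
    ∫ y, arcsin (|y i| / √(∑ j ∈ s, y j ^ 2)) ∂(Measure.pi fun _ => μ) ≤ arcsin √(1 / #s) := by
  have hS (y : ι → ℝ) : 0 ≤ ∑ j ∈ s, y j ^ 2 := sum_nonneg fun j _ => sq_nonneg (y j)
  have hm : ∫ y, (|y i| / √(∑ j ∈ s, y j ^ 2)) ^ 2 ∂(Measure.pi fun _ => μ) = 1 / #s := by
    simp only [div_pow, sq_abs, sq_sqrt (hS _)]
    exact integral_sq_div_sum_sq μ hi
  have h7 : (7 : ℝ) ≤ #s := by exact_mod_cast hs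
  rw [← hm]
  refine integral_arcsin_le_arcsin_sqrt_integral_sq (Measurable.aestronglyMeasurable (by fun_prop))
    (fun y => by positivity) (fun y => ?_) (by rw [hm]; positivity) ?_
  · exact div_le_one_of_le₀ (abs_le_sqrt (single_le_sum (fun j _ => sq_nonneg (y j)) hi))
      (sqrt_nonneg _)
  · rw [hm, div_le_div_iff₀ (by linarith) (by norm_num)]
    linarith

lemma stdGaussian_eq_stdGaussian_euclideanSpace (d : ℕ) :
    _root_.stdGaussian d = ProbabilityTheory.stdGaussian (EuclideanSpace ℝ (Fin d)) :=
  map_pi_eq_stdGaussian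

section

variable {E : Type*} [NormedAddCommGroup E] [InnerProductSpace ℝ E] {ι : Type*} [Fintype ι]

lemma integral_stdGaussian_eq_integral_pi [FiniteDimensional ℝ E] [MeasurableSpace E]
    [BorelSpace E] {G : Type*} [NormedAddCommGroup G] [NormedSpace ℝ G]
    (b : OrthonormalBasis ι ℝ E) (f : E → G) :
    ∫ x, f x ∂ProbabilityTheory.stdGaussian E =
      ∫ y, f (b.repr.symm (WithLp.toLp 2 y)) ∂Measure.pi fun _ => gaussianReal 0 1 := by
  set e := (MeasurableEquiv.toLp 2 (ι → ℝ)).trans b.repr.symm.toHomeomorph.toMeasurableEquiv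
  have he : (fun y : ι → ℝ => ∑ i, y i • b i) = e := by
    ext y
    simp [e, ← b.sum_repr_symm]
  rw [stdGaussian_eq_map_pi_orthonormalBasis b, he, integral_map_equiv]
  rfl

lemma exists_orthonormalBasis_apply_eq_pair [FiniteDimensional ℝ E]
    (hι : Module.finrank ℝ E = Fintype.card ι) {i j : ι} (hij : i ≠ j) {u w : E}
    (hu : ‖u‖ = 1) (hw : ‖w‖ = 1) (huw : ⟪u, w⟫ = 0) :
    ∃ b : OrthonormalBasis ι ℝ E, b i = u ∧ b j = w := by
  classical
  have hpair : Orthonormal ℝ (({i, j} : Set ι).domRestrict fun k => if k = i then u else w) := by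
    rw [orthonormal_iff_ite]
    rintro ⟨a, ha⟩ ⟨c, hc⟩
    simp only [Set.mem_insert_iff, Set.mem_singleton_iff] at ha hc
    rcases ha with rfl | rfl <;> rcases hc with rfl | rfl <;>
      simp [hij, hij.symm, hu, hw, huw, real_inner_comm u]
  obtain ⟨b, hb⟩ := hpair.exists_orthonormalBasis_extension_of_card_eq hι
  exact ⟨b, by simpa using hb i (by simp), by simpa [hij.symm] using hb j (by simp)⟩

lemma div_norm_sq_smul_eq_inner_smul (v x : E) :
    (⟪v, x⟫ / ‖v‖ ^ 2) • v = ⟪‖v‖⁻¹ • v, x⟫ • (‖v‖⁻¹ • v) := by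
  rw [real_inner_smul_left, smul_smul]
  ring_nf

namespace OrthonormalBasis

lemma inner_sub_inner_smul_of_ne (b : OrthonormalBasis ι ℝ E) {i j : ι} (hij : i ≠ j) (x : E) :
    ⟪x - ⟪b i, x⟫ • b i, b j⟫ = ⟪b j, x⟫ := by
  rw [inner_sub_left, real_inner_smul_left, b.orthonormal.inner_eq_zero hij, mul_zero,
    sub_zero, real_inner_comm]

lemma norm_sub_inner_smul_sq [DecidableEq ι] (b : OrthonormalBasis ι ℝ E) (i : ι) (x : E) :
    ‖x - ⟪b i, x⟫ • b i‖ ^ 2 = ∑ j ∈ univ.erase i, ⟪b j, x⟫ ^ 2 := by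
  rw [norm_sub_sq_real, real_inner_smul_right, norm_smul, mul_pow, b.orthonormal.1 i,
    ← b.sum_sq_inner_right x, ← add_sum_erase _ _ (mem_univ i), real_inner_comm,
    Real.norm_eq_abs, sq_abs]
  ring

lemma abs_inner_div_norm_sub_inner_smul_repr_symm [DecidableEq ι] (b : OrthonormalBasis ι ℝ E)
    {i j : ι} (hij : i ≠ j) (y : ι → ℝ) :
    let x := b.repr.symm (WithLp.toLp 2 y)
    |⟪x - ⟪b i, x⟫ • b i, b j⟫| / ‖x - ⟪b i, x⟫ • b i‖ =
      |y j| / √(∑ k ∈ univ.erase i, y k ^ 2) := by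
  intro x
  have hcoord (k : ι) : ⟪b k, x⟫ = y k := by
    rw [← b.repr_apply_apply, LinearIsometryEquiv.apply_symm_apply]
  rw [b.inner_sub_inner_smul_of_ne hij, ← sqrt_sq (norm_nonneg _), b.norm_sub_inner_smul_sq]
  simp only [hcoord]

end OrthonormalBasis

end

/-- The bound `E[θ_P] ≤ arccos √(1 − 1/(d−1))` from the proof of Theorem 1:
for `n ~ N(0, I)` in `ℝ^d` with `d ≥ 8`, `Q` the orthogonal projection onto the
hyperplane orthogonal to a nonzero vector `v`, and `w` a unit vector orthogonal
to `v`, `E[arcsin (|⟪Q n, w⟫|/‖Q n‖)] ≤ arccos √(1 − 1/(d−1))`. -/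
theorem expected_arcsin_abs_inner_proj_le {d : ℕ} (hd : 8 ≤ d)
    (v : EuclideanSpace ℝ (Fin d)) (hv : v ≠ 0)
    (w : EuclideanSpace ℝ (Fin d)) (hw : ‖w‖ = 1) (hwv : ⟪w, v⟫ = 0) :
    ∫ n, Real.arcsin (|⟪n - (⟪v, n⟫ / ‖v‖ ^ 2) • v, w⟫|
        / ‖n - (⟪v, n⟫ / ‖v‖ ^ 2) • v‖) ∂(stdGaussian d)
      ≤ Real.arccos (Real.sqrt (1 - 1 / ((d : ℝ) - 1))) := by
  have := nullSingletonClass_gaussianReal (μ := 0) one_ne_zero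
  set i₀ : Fin d := ⟨0, by omega⟩
  set i₁ : Fin d := ⟨1, by omega⟩
  have hi₁ : i₁ ∈ univ.erase i₀ := by simp [i₀, i₁, Fin.ext_iff]
  have hcard : #(univ.erase i₀) = d - 1 := by simp
  have hu : ‖‖v‖⁻¹ • v‖ = 1 := by
    rw [norm_smul, norm_inv, norm_norm, inv_mul_cancel₀ (norm_ne_zero_iff.2 hv)]
  obtain ⟨b, hb₀, hb₁⟩ := exists_orthonormalBasis_apply_eq_pair (by simp) (ne_of_mem_erase hi₁).symm
    hu hw (by rw [real_inner_smul_left, real_inner_comm, hwv, mul_zero])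
  calc _ = ∫ y, arcsin (|y i₁| / √(∑ j ∈ univ.erase i₀, y j ^ 2))
        ∂(Measure.pi fun _ => gaussianReal 0 1) := by
        rw [stdGaussian_eq_stdGaussian_euclideanSpace, integral_stdGaussian_eq_integral_pi b]
        congr with y
        rw [div_norm_sq_smul_eq_inner_smul, ← hb₀, ← hb₁,
          b.abs_inner_div_norm_sub_inner_smul_repr_symm (ne_of_mem_erase hi₁).symm]
    _ ≤ arcsin √(1 / #(univ.erase i₀)) :=
        integral_arcsin_abs_div_sqrt_sum_sq_le _ hi₁ (by omega)
    _ = arccos √(1 - 1 / ((d : ℝ) - 1)) := by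
        have hd' : (8 : ℝ) ≤ d := by exact_mod_cast hd
        rw [hcard, Nat.cast_sub (by omega), Nat.cast_one, arccos_eq_arcsin (sqrt_nonneg _),
          sq_sqrt (by rw [sub_nonneg, div_le_one (by linarith)]; linarith)]
        ring_nf
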